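/- arXiv:2401.06642 — 4 statements merged into one kernel-verified Lean document; each statement's English description precedes it below -/
import Mathlib

section
/- Let δ, θ > 0, set R = (δ(θ+1))^{-1/θ} and K_δ = (1/(δ(θ+1)))^{1/θ} · θ/(θ+1). If 0 ≤ K ≤ K_δ and s ∈ (0, R), then δ·s^{1+θ} + K ≤ R. -/
theorem stmt_0 (δ θ K s R Kδ : ℝ) (hδ : 0 < δ) (hθ : 0 < θ)
    (hR : R = (δ * (θ + 1)) ^ (-(1 / θ)))
    (hKδ : Kδ = (1 / (δ * (θ + 1))) ^ (1 / θ) * (θ / (θ + 1)))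
    (hK0 : 0 ≤ K) (hKle : K ≤ Kδ) (hs : s ∈ Set.Ioo (0 : ℝ) R) :
    δ * s ^ (1 + θ) + K ≤ R := by
  obtain ⟨hs0, hsR⟩ := hs
  have hθ1 : (0 : ℝ) < θ + 1 := by linarith
  have hA : (0 : ℝ) < δ * (θ + 1) := mul_pos hδ hθ1
  have hRpos : 0 < R := by rw [hR]; exact Real.rpow_pos_of_pos hA _
  have hRθ : R ^ θ = (δ * (θ + 1))⁻¹ := by
    rw [hR, ← Real.rpow_mul hA.le, show -(1 / θ) * θ = -1 by field_simp,
      Real.rpow_neg_one]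
  have hKδR : Kδ = R * (θ / (θ + 1)) := by
    rw [hKδ, hR, one_div, ← Real.rpow_neg_one (δ * (θ + 1)),
      ← Real.rpow_mul hA.le, show (-1 : ℝ) * (1 / θ) = -(1 / θ) by ring]
  have hmono : s ^ (1 + θ) ≤ R ^ (1 + θ) :=
    Real.rpow_le_rpow hs0.le hsR.le (by linarith)
  have hRsum : R ^ (1 + θ) = R * R ^ θ := by
    rw [Real.rpow_add hRpos, Real.rpow_one]
  have key : δ * R ^ (1 + θ) = R / (θ + 1) := by
    rw [hRsum, hRθ]
    field_simp
  have h1 : δ * s ^ (1 + θ) ≤ R / (θ + 1) := by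
    rw [← key]; exact mul_le_mul_of_nonneg_left hmono hδ.le
  have h2 : K ≤ R * (θ / (θ + 1)) := hKδR ▸ hKle
  have : R / (θ + 1) + R * (θ / (θ + 1)) = R := by field_simp; ring
  linarith
end

section
/- For all real numbers s, t ≥ 0 and every A > 0, the inequality s·t ≤ A·s·log(e + s) + A·e^{t/A} holds. -/
/-!
Substituting `t = A u` and dividing by `A`, the claim becomes the Young-type inequality
`s (u - v) ≤ exp u` with `v = log (e + s)`, which holds whenever `0 ≤ s ≤ exp v`: for `u ≤ v` the
left side is nonpositive, and for `u > v` we have `s (u - v) ≤ exp v (u - v) ≤ exp v exp (u - v)`.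
-/

open Real

theorem mul_sub_le_exp_of_le_exp {s u v : ℝ} (hs : 0 ≤ s) (hsv : s ≤ exp v) :
    s * (u - v) ≤ exp u := by
  rcases le_or_gt u v with huv | hvu
  · nlinarith [exp_pos u]
  · calc s * (u - v) ≤ exp v * (u - v) := by gcongr
      _ ≤ exp v * exp (u - v) := by gcongr; linarith [add_one_le_exp (u - v)]
      _ = exp u := by rw [← exp_add]; ring_nf

theorem stmt_1_general (s t A : ℝ) (hs : 0 ≤ s) (hA : 0 < A) :
    s * t ≤ A * s * Real.log (Real.exp 1 + s) + A * Real.exp (t / A) := by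
  have hs_le : s ≤ exp (log (exp 1 + s)) := by
    rw [exp_log (by positivity)]
    linarith [exp_pos 1]
  have key := mul_sub_le_exp_of_le_exp (u := t / A) hs hs_le
  calc s * t = A * s * log (exp 1 + s) + A * (s * (t / A - log (exp 1 + s))) := by
        field_simp; ring
    _ ≤ A * s * log (exp 1 + s) + A * exp (t / A) := by gcongr

theorem stmt_1 (s t A : ℝ) (hs : 0 ≤ s) (ht : 0 ≤ t) (hA : 0 < A) :
    s * t ≤ A * s * Real.log (Real.exp 1 + s) + A * Real.exp (t / A) :=
  stmt_1_general s t A hs hA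
end

section
/- Let h(s) = s·log(e + |s|) for s ∈ ℝ and H(s) = ∫₀ˢ dt/(|h(t)| + 1). Then |H(s)| → ∞ as |s| → ∞. -/
/-!
The integrand `1 / (|h t| + 1)` is even, so `H` is odd and it suffices to let `s → +∞`.
For `t ≥ 0` it dominates `1 / ((t + e) log (t + e))`, the derivative of `log (log (t + e))`,
because `e · log (t + e) ≥ e ≥ 1`. Hence `H s ≥ log (log (s + e)) → ∞`.
-/

open Real Filter intervalIntegral

theorem intervalIntegral_zero_neg_of_even {f : ℝ → ℝ} (hf : ∀ t, f (-t) = f t) (s : ℝ) :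
    ∫ t in (0 : ℝ)..-s, f t = -∫ t in (0 : ℝ)..s, f t := by
  calc ∫ t in (0 : ℝ)..-s, f t = ∫ t in (0 : ℝ)..-s, f (-t) := by simp only [hf]
    _ = ∫ t in s..0, f t := by rw [integral_comp_neg]; simp
    _ = -∫ t in (0 : ℝ)..s, f t := integral_symm _ _

theorem tendsto_abs_intervalIntegral_cocompact_of_even {f : ℝ → ℝ} (hf : ∀ t, f (-t) = f t)
    (htop : Tendsto (fun s => ∫ t in (0 : ℝ)..s, f t) atTop atTop) :
    Tendsto (fun s => |∫ t in (0 : ℝ)..s, f t|) (cocompact ℝ) atTop := by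
  have habs : Tendsto (fun s => |∫ t in (0 : ℝ)..s, f t|) atTop atTop :=
    tendsto_atTop_mono (fun _ => le_abs_self _) htop
  rw [cocompact_eq_atBot_atTop, tendsto_sup]
  refine ⟨?_, habs⟩
  have hneg := habs.comp tendsto_neg_atBot_atTop
  refine hneg.congr fun s => ?_
  simp [Function.comp, intervalIntegral_zero_neg_of_even hf]

theorem hasDerivAt_log_log_add_exp_one {x : ℝ} (hx : 0 ≤ x) :
    HasDerivAt (fun y => log (log (y + exp 1))) (1 / ((x + exp 1) * log (x + exp 1))) x := by
  have hpos : 0 < x + exp 1 := by positivity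
  have hlog : 0 < log (x + exp 1) := log_pos (by linarith [add_one_le_exp 1])
  convert (((hasDerivAt_id' x).add_const (exp 1)).log hpos.ne').log hlog.ne' using 1
  rw [div_div]

theorem one_div_mul_log_le_one_div_abs_mul_log_add_one {t : ℝ} (ht : 0 ≤ t) :
    1 / ((t + exp 1) * log (t + exp 1)) ≤ 1 / (|t * log (exp 1 + |t|)| + 1) := by
  have hlog : 1 ≤ log (t + exp 1) := by
    rw [le_log_iff_exp_le (by positivity)]
    linarith
  have he : 1 ≤ exp 1 := by linarith [add_one_le_exp 1]
  rw [abs_of_nonneg ht, add_comm (exp 1), abs_of_nonneg (by positivity)]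
  gcongr
  nlinarith

theorem log_log_add_exp_one_le_integral {s : ℝ} (hs : 0 ≤ s) :
    log (log (s + exp 1)) ≤ ∫ t in (0 : ℝ)..s, 1 / (|t * log (exp 1 + |t|)| + 1) := by
  have hcont : Continuous fun t : ℝ => 1 / (|t * log (exp 1 + |t|)| + 1) := by
    refine continuous_const.div ?_ fun t => by positivity
    fun_prop (disch := intro; positivity)
  have hderiv (x : ℝ) (hx : 0 ≤ x) := hasDerivAt_log_log_add_exp_one hx
  have key := sub_le_integral_of_hasDeriv_right_of_le hs
    (fun x hx => (hderiv x hx.1).continuousAt.continuousWithinAt)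
    (fun x hx => (hderiv x hx.1.le).hasDerivWithinAt) hcont.integrableOn_Icc
    (fun t ht => one_div_mul_log_le_one_div_abs_mul_log_add_one ht.1.le)
  simpa using key

theorem stmt_2 (h H : ℝ → ℝ)
    (hh : ∀ s, h s = s * Real.log (Real.exp 1 + |s|))
    (hH : ∀ s, H s = ∫ t in (0 : ℝ)..s, 1 / (|h t| + 1)) :
    Filter.Tendsto (fun s => |H s|) (Filter.cocompact ℝ) Filter.atTop := by
  have hH' : H = fun s => ∫ t in (0 : ℝ)..s, 1 / (|t * log (exp 1 + |t|)| + 1) := by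
    funext s; simp only [hH, hh]
  have heven (t : ℝ) :
      1 / (|-t * log (exp 1 + |-t|)| + 1) = 1 / (|t * log (exp 1 + |t|)| + 1) := by
    rw [abs_neg, neg_mul, abs_neg]
  have hloglog : Tendsto (fun s : ℝ => log (log (s + exp 1))) atTop atTop :=
    tendsto_log_atTop.comp (tendsto_log_atTop.comp (tendsto_atTop_add_const_right _ _ tendsto_id))
  rw [hH']
  refine tendsto_abs_intervalIntegral_cocompact_of_even heven (tendsto_atTop_mono' _ ?_ hloglog)
  filter_upwards [eventually_ge_atTop 0] with s hs
  exact log_log_add_exp_one_le_integral hs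
end

section
/- Let h : ℝ → ℝ be continuous, nonnegative on [0,∞), and let K, ε, R > 0 satisfy ∫₀^∞ ds/(K·h(s) + ε) > R. Then there exists a > 0 with ∫₀ᵃ ds/(K·h(s) + ε) = R, and the inverse function ū of t ↦ ∫_t^a ds/(K·h(s) + ε) solves the initial value problem −ū'(r) = K·h(ū(r)) + ε on (0, R) with ū(R) = 0. -/
/-! On `[0, ∞)` the integrand `f = 1 / (K h + ε)` is continuous and positive. Monotone convergence
turns the hypothesis on the improper integral into `R < ∫₀ᵇ f` for some `b`, and the intermediate
value theorem then yields `a` with `∫₀ᵃ f = R`. The map `G t = ∫ₜᵃ f` is a continuous strictly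
decreasing bijection of `[0, a]` onto `[0, R]` with `G' = -f`; hence its inverse `ū` is continuous
and, by the inverse function theorem in one variable, `ū' r = 1 / G'(ū r) = -(K h (ū r) + ε)`. -/

open Set MeasureTheory intervalIntegral Filter Topology Function

section InverseFunction

variable {G g : ℝ → ℝ} {a b : ℝ}

theorem ContinuousOn.invFunOn_mem_Ioo_and_apply_eq (hab : a ≤ b) (hcont : ContinuousOn G (Icc a b))
    {y : ℝ} (hy : y ∈ Ioo (G b) (G a)) :
    invFunOn G (Icc a b) y ∈ Ioo a b ∧ G (invFunOn G (Icc a b) y) = y := by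
  obtain ⟨hmem, hGy⟩ := invFunOn_pos (intermediate_value_Icc' hab hcont (Ioo_subset_Icc_self hy))
  refine ⟨⟨hmem.1.lt_of_ne ?_, hmem.2.lt_of_ne ?_⟩, hGy⟩
  · rintro hax; rw [← hax] at hGy; exact hy.2.ne' hGy
  · rintro hbx; rw [hbx] at hGy; exact hy.1.ne hGy

theorem StrictAntiOn.hasDerivAt_invFunOn (hab : a ≤ b) (hcont : ContinuousOn G (Icc a b))
    (hanti : StrictAntiOn G (Icc a b)) (hderiv : ∀ t ∈ Ioo a b, HasDerivAt G (g t) t)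
    (hg : ∀ t ∈ Ioo a b, g t ≠ 0) {r : ℝ} (hr : r ∈ Ioo (G b) (G a)) :
    HasDerivAt (invFunOn G (Icc a b)) (g (invFunOn G (Icc a b) r))⁻¹ r := by
  set u := invFunOn G (Icc a b)
  have hu := fun y (hy : y ∈ Ioo (G b) (G a)) ↦ hcont.invFunOn_mem_Ioo_and_apply_eq hab hy
  have hleft : ∀ t ∈ Ioo a b, u (G t) = t := fun t ht ↦
    hanti.injOn.leftInvOn_invFunOn (Ioo_subset_Icc_self ht)
  have hGmaps : ∀ t ∈ Ioo a b, G t ∈ Ioo (G b) (G a) := fun t ht ↦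
    ⟨hanti (Ioo_subset_Icc_self ht) (right_mem_Icc.2 hab) ht.2,
      hanti (left_mem_Icc.2 hab) (Ioo_subset_Icc_self ht) ht.1⟩
  -- `-u` is strictly increasing and maps `Ioo (G b) (G a)` onto `Ioo (-b) (-a)`, hence continuous
  have hmono : StrictMonoOn (fun y ↦ -u y) (Ioo (G b) (G a)) := by
    intro y hy y' hy' hlt
    rw [← (hu y hy).2, ← (hu y' hy').2] at hlt
    exact neg_lt_neg ((hanti.lt_iff_gt (Ioo_subset_Icc_self (hu y hy).1)
      (Ioo_subset_Icc_self (hu y' hy').1)).1 hlt)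
  have himage : Ioo (-b) (-a) ⊆ (fun y ↦ -u y) '' Ioo (G b) (G a) := fun z hz ↦
    ⟨G (-z), hGmaps (-z) ⟨by linarith [hz.2], by linarith [hz.1]⟩, by
      simp only [hleft (-z) ⟨by linarith [hz.2], by linarith [hz.1]⟩, neg_neg]⟩
  have hcont_u : ContinuousAt u r := by
    have hur := (hu r hr).1
    have hneg := hmono.continuousAt_of_image_mem_nhds (isOpen_Ioo.mem_nhds hr)
      (mem_of_superset (isOpen_Ioo.mem_nhds ⟨neg_lt_neg hur.2, neg_lt_neg hur.1⟩) himage)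
    simpa only [Pi.neg_def, neg_neg] using hneg.neg
  have hGu : ∀ᶠ y in 𝓝 r, G (u y) = y := by
    filter_upwards [isOpen_Ioo.mem_nhds hr] with y hy using (hu y hy).2
  exact (hderiv _ (hu r hr).1).of_local_left_inverse hcont_u (hg _ (hu r hr).1) hGu

end InverseFunction

section PositiveIntegrand

variable {f : ℝ → ℝ}

theorem ContinuousOn.intervalIntegrable_of_Ici (hf : ContinuousOn f (Ici 0)) {u v : ℝ}
    (hu : 0 ≤ u) (hv : 0 ≤ v) : IntervalIntegrable f volume u v :=
  (hf.mono fun _ hx ↦ le_trans (le_min hu hv) hx.1).intervalIntegrable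

theorem exists_lt_intervalIntegral_of_lt_lintegral_Ioi (hf : ContinuousOn f (Ici 0))
    (hf0 : ∀ s, 0 ≤ s → 0 ≤ f s) {R : ℝ}
    (hR : ENNReal.ofReal R < ∫⁻ s in Ioi 0, ENNReal.ofReal (f s)) :
    ∃ b ≥ 0, R < ∫ s in 0..b, f s := by
  have hlim := (aecover_Iic (μ := volume.restrict (Ioi (0 : ℝ))) tendsto_id)
    |>.lintegral_tendsto_of_countably_generated
      ((hf.mono Ioi_subset_Ici_self).aemeasurable measurableSet_Ioi).ennreal_ofReal
  obtain ⟨b, hb0, hb⟩ := ((eventually_ge_atTop 0).and (hlim.eventually_const_lt hR)).exists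
  refine ⟨b, hb0, ?_⟩
  rw [id_eq, Measure.restrict_restrict measurableSet_Iic, Iic_inter_Ioi,
    ← ofReal_integral_eq_lintegral_ofReal, ← integral_of_le hb0] at hb
  · exact (ENNReal.ofReal_lt_ofReal_iff'.1 hb).1
  · exact (hf.intervalIntegrable_of_Ici le_rfl hb0).1
  · filter_upwards [ae_restrict_mem measurableSet_Ioc] with s hs using hf0 s hs.1.le

theorem exists_pos_intervalIntegral_eq (hf : ContinuousOn f (Ici 0)) {R b : ℝ} (hR : 0 < R)
    (hb : 0 ≤ b) (hRb : R < ∫ s in 0..b, f s) : ∃ a > 0, ∫ s in 0..a, f s = R := by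
  have hcont : ContinuousOn (fun t ↦ ∫ s in 0..t, f s) (Icc 0 b) := by
    simpa only [uIcc_of_le hb] using
      continuousOn_primitive_interval' (hf.intervalIntegrable_of_Ici le_rfl hb) left_mem_uIcc
  obtain ⟨a, ha, hFa⟩ := intermediate_value_Icc hb hcont ⟨by simpa using hR.le, hRb.le⟩
  refine ⟨a, ha.1.lt_of_ne ?_, hFa⟩
  rintro rfl
  exact hR.ne (by simpa using hFa)

theorem strictAntiOn_intervalIntegral_left (hf : ContinuousOn f (Ici 0))
    (hpos : ∀ s, 0 ≤ s → 0 < f s) {a : ℝ} (ha : 0 ≤ a) :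
    StrictAntiOn (fun t ↦ ∫ s in t..a, f s) (Ici 0) := by
  intro t ht t' ht' hlt
  have hsplit := integral_add_adjacent_intervals (hf.intervalIntegrable_of_Ici ht ht')
    (hf.intervalIntegrable_of_Ici ht' ha)
  have hmid := intervalIntegral_pos_of_pos_on (hf.intervalIntegrable_of_Ici ht ht')
    (fun x hx ↦ hpos x (le_trans ht hx.1.le)) hlt
  simp only
  linarith

theorem continuousOn_intervalIntegral_left (hf : ContinuousOn f (Ici 0)) {a : ℝ} (ha : 0 ≤ a) :
    ContinuousOn (fun t ↦ ∫ s in t..a, f s) (Icc 0 a) := by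
  have hint : IntegrableOn f (uIcc 0 a) := by
    rw [uIcc_of_le ha]; exact (hf.mono Icc_subset_Ici_self).integrableOn_Icc
  rw [← uIcc_of_le ha]
  exact continuousOn_primitive_interval_left hint

theorem hasDerivAt_intervalIntegral_left (hf : ContinuousOn f (Ici 0)) {a t : ℝ} (ha : 0 ≤ a)
    (ht : 0 < t) : HasDerivAt (fun u ↦ ∫ s in u..a, f s) (-f t) t :=
  integral_hasDerivAt_left (hf.intervalIntegrable_of_Ici ht.le ha)
    ((hf.mono Ioi_subset_Ici_self).stronglyMeasurableAtFilter isOpen_Ioi t ht)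
    (hf.continuousAt (Ici_mem_nhds ht))

end PositiveIntegrand

theorem stmt_7 (h : ℝ → ℝ) (hcont : Continuous h) (hpos : ∀ s, 0 ≤ s → 0 ≤ h s)
    (K ε R : ℝ) (hK : 0 < K) (hε : 0 < ε) (hR : 0 < R)
    (hbig : ENNReal.ofReal R <
      ∫⁻ s in Set.Ioi (0 : ℝ), ENNReal.ofReal (1 / (K * h s + ε))) :
    ∃ a > 0, (∫ s in (0 : ℝ)..a, 1 / (K * h s + ε)) = R ∧
      ∃ ubar : ℝ → ℝ,
        (∀ t ∈ Set.Icc (0 : ℝ) a, ubar (∫ s in t..a, 1 / (K * h s + ε)) = t) ∧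
        ubar R = 0 ∧
        (∀ r ∈ Set.Ioo (0 : ℝ) R, HasDerivAt ubar (-(K * h (ubar r) + ε)) r) := by
  set f : ℝ → ℝ := fun s ↦ 1 / (K * h s + ε)
  have hden : ∀ s, 0 ≤ s → 0 < K * h s + ε := fun s hs ↦ by have := hpos s hs; positivity
  have hfpos : ∀ s, 0 ≤ s → 0 < f s := fun s hs ↦ one_div_pos.2 (hden s hs)
  have hf : ContinuousOn f (Ici 0) :=
    continuousOn_const.div (by fun_prop) fun s hs ↦ (hden s hs).ne'
  obtain ⟨b, hb, hRb⟩ :=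
    exists_lt_intervalIntegral_of_lt_lintegral_Ioi hf (fun s hs ↦ (hfpos s hs).le) hbig
  obtain ⟨a, ha, hFa⟩ := exists_pos_intervalIntegral_eq hf hR hb hRb
  set G : ℝ → ℝ := fun t ↦ ∫ s in t..a, f s
  have hanti : StrictAntiOn G (Icc 0 a) :=
    (strictAntiOn_intervalIntegral_left hf hfpos ha.le).mono Icc_subset_Ici_self
  have hleft : ∀ t ∈ Icc 0 a, invFunOn G (Icc 0 a) (G t) = t := fun t ht ↦
    hanti.injOn.leftInvOn_invFunOn ht
  have hG0 : G 0 = R := hFa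
  have hGa : G a = 0 := integral_same
  refine ⟨a, ha, hFa, invFunOn G (Icc 0 a), hleft, hG0 ▸ hleft 0 (left_mem_Icc.2 ha.le),
    fun r hr ↦ ?_⟩
  convert hanti.hasDerivAt_invFunOn (G := G) ha.le (continuousOn_intervalIntegral_left hf ha.le)
    (fun t ht ↦ hasDerivAt_intervalIntegral_left hf ha.le ht.1)
    (fun t ht ↦ neg_ne_zero.2 (hfpos t ht.1.le).ne') (r := r) (by rwa [hG0, hGa]) using 1
  simp [f]
end
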